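/- For the matrix D^{ij}[φ](p) = (e^{2φ} δ^{ij} + p^i p^j)/√(e^{2φ}+|p|²), one has Δ_p D^{ij}[φ] = (1/√(e^{2φ}+|p|²)) (2δ^{ij} − 4p^i p^j/(e^{2φ}+|p|²)) − 3e^{2φ} D^{ij}[φ]/(e^{2φ}+|p|²)², and there is a constant C with Δ_p D^{ij}[φ] x_i x_j ≤ C e^{−φ}|x|² for all x ∈ ℝ³. -/

import Mathlib

noncomputable def Dmat (φ : ℝ) (p : EuclideanSpace ℝ (Fin 3)) (i j : Fin 3) : ℝ :=
  (Real.exp (2 * φ) * (if i = j then 1 else 0) + p i * p j) /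
    Real.sqrt (Real.exp (2 * φ) + ‖p‖ ^ 2)

/-!
With `ρ(q) = (a + ‖q‖²)^(-1/2)` one has `∇(ρ^m) = -m ρ^(m+2) q`, so two directional derivatives of
`D = (c + qᵢ qⱼ) ρ` along `e` are explicit; summing over the standard basis of `ℝⁿ` gives
`2 δᵢⱼ ρ - 4 pᵢ pⱼ ρ³ - n N ρ³ + 3 N ‖p‖² ρ⁵` with `N = c + pᵢ pⱼ`. In dimension `3` the identity
`‖p‖² = ρ⁻² - a` collapses the last two terms to `-3 a N ρ⁵`. The quadratic form of the result is
`α ‖x‖² + β ⟪p, x⟫²` with `β ≤ 0` and `α ≤ 2 ρ ≤ 2 / √a`, and `√a = e^φ` for `a = e^{2φ}`.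
-/

open scoped RealInnerProductSpace

theorem iteratedFDeriv_two_apply_eq_fderiv_fderiv_apply {E F : Type*} [NormedAddCommGroup E]
    [NormedSpace ℝ E] [NormedAddCommGroup F] [NormedSpace ℝ F] {f : E → F} {p : E}
    (hf : DifferentiableAt ℝ (fderiv ℝ f) p) (v w : E) :
    iteratedFDeriv ℝ 2 f p ![v, w] = fderiv ℝ (fun q => fderiv ℝ f q w) p v := by
  rw [iteratedFDeriv_two_apply, fderiv_clm_apply hf (differentiableAt_const w)]
  simp

theorem hasFDerivAt_inv_sqrt_add_norm_sq_pow {E : Type*} [NormedAddCommGroup E]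
    [InnerProductSpace ℝ E] {a : ℝ} (ha : 0 < a) (m : ℕ) (p : E) :
    HasFDerivAt (fun q : E => (√(a + ‖q‖ ^ 2))⁻¹ ^ m)
      (-(m * (√(a + ‖p‖ ^ 2))⁻¹ ^ (m + 2)) • innerSL ℝ p) p := by
  have hw : 0 < a + ‖p‖ ^ 2 := by positivity
  have hsqrt := (Real.hasDerivAt_sqrt hw.ne').comp_hasFDerivAt p
    ((hasFDerivAt_id p).norm_sq.const_add a)
  have hinv := (hasDerivAt_inv (Real.sqrt_pos.2 hw).ne').comp_hasFDerivAt p hsqrt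
  refine (hinv.pow m).congr_fderiv ?_
  ext v
  rcases m with _ | m
  · simp
  · simp only [id_eq, Function.comp_apply, add_tsub_cancel_right, inv_pow, nsmul_eq_mul,
      Nat.cast_add, Nat.cast_one, one_div, mul_inv_rev, ContinuousLinearMap.comp_id, neg_smul,
      smul_neg, neg_apply, smul_apply, coe_innerSL_apply, Nat.cast_ofNat, smul_eq_mul, neg_inj]
    field_simp
    ring

section Coordinates

variable {ι : Type*} [Fintype ι] {a : ℝ}

theorem contDiff_quadratic_div_sqrt (ha : 0 < a) (c : ℝ) (i j : ι) {n : WithTop ℕ∞} :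
    ContDiff ℝ n (fun q : EuclideanSpace ℝ ι => (c + q i * q j) / √(a + ‖q‖ ^ 2)) := by
  have hproj (k : ι) : ContDiff ℝ n (fun q : EuclideanSpace ℝ ι => q k) :=
    (EuclideanSpace.proj k : EuclideanSpace ℝ ι →L[ℝ] ℝ).contDiff
  refine (contDiff_const.add ((hproj i).mul (hproj j))).div
    ((contDiff_const.add (contDiff_norm_sq ℝ)).sqrt fun q => by positivity) fun q => ?_
  have : 0 < a + ‖q‖ ^ 2 := by positivity
  positivity

theorem hasFDerivAt_const_add_coord_mul_coord (c : ℝ) (i j : ι) (p : EuclideanSpace ℝ ι) :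
    HasFDerivAt (fun q : EuclideanSpace ℝ ι => c + q i * q j)
      (p i • (EuclideanSpace.proj j : EuclideanSpace ℝ ι →L[ℝ] ℝ) + p j • EuclideanSpace.proj i)
      p := by
  have hproj (k : ι) := (EuclideanSpace.proj k : EuclideanSpace ℝ ι →L[ℝ] ℝ).hasFDerivAt (x := p)
  simpa using ((hproj i).mul (hproj j)).const_add c

theorem fderiv_quadratic_div_sqrt_apply (ha : 0 < a) (c : ℝ) (i j : ι)
    (q v : EuclideanSpace ℝ ι) :
    fderiv ℝ (fun q : EuclideanSpace ℝ ι => (c + q i * q j) / √(a + ‖q‖ ^ 2)) q v =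
      (v i * q j + q i * v j) * (√(a + ‖q‖ ^ 2))⁻¹ -
        (c + q i * q j) * ⟪q, v⟫ * (√(a + ‖q‖ ^ 2))⁻¹ ^ 3 := by
  have h := (hasFDerivAt_const_add_coord_mul_coord c i j q).mul
    (hasFDerivAt_inv_sqrt_add_norm_sq_pow ha 1 q)
  rw [(h.congr_of_eventuallyEq (by filter_upwards with q; simp [div_eq_mul_inv])).fderiv]
  simp only [Nat.cast_one, Nat.reduceAdd, inv_pow, one_mul, neg_smul, smul_neg, pow_one, smul_add,
    add_apply, neg_apply, smul_apply, coe_innerSL_apply, smul_eq_mul, PiLp.proj_apply]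
  ring

theorem iteratedFDeriv_two_quadratic_div_sqrt (ha : 0 < a) (c : ℝ) (i j : ι)
    (p e : EuclideanSpace ℝ ι) :
    iteratedFDeriv ℝ 2 (fun q : EuclideanSpace ℝ ι => (c + q i * q j) / √(a + ‖q‖ ^ 2)) p
        ![e, e] =
      2 * e i * e j * (√(a + ‖p‖ ^ 2))⁻¹ -
        2 * (e i * p j + p i * e j) * ⟪p, e⟫ * (√(a + ‖p‖ ^ 2))⁻¹ ^ 3 -
        (c + p i * p j) * ‖e‖ ^ 2 * (√(a + ‖p‖ ^ 2))⁻¹ ^ 3 +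
        3 * (c + p i * p j) * ⟪p, e⟫ ^ 2 * (√(a + ‖p‖ ^ 2))⁻¹ ^ 5 := by
  have hf := (contDiff_quadratic_div_sqrt ha c i j (n := 2)).fderiv_right (m := 1) le_rfl
  rw [iteratedFDeriv_two_apply_eq_fderiv_fderiv_apply (hf.differentiable one_ne_zero p)]
  simp only [fderiv_quadratic_div_sqrt_apply ha]
  have hproj (k : ι) := (EuclideanSpace.proj k : EuclideanSpace ℝ ι →L[ℝ] ℝ).hasFDerivAt (x := p)
  have hlin := (((hproj j).const_mul (e i)).add ((hproj i).mul_const (e j))).mul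
    (hasFDerivAt_inv_sqrt_add_norm_sq_pow ha 1 p)
  have hquad := ((hasFDerivAt_const_add_coord_mul_coord c i j p).mul
    ((hasFDerivAt_id p).inner ℝ (hasFDerivAt_const e p))).mul
    (hasFDerivAt_inv_sqrt_add_norm_sq_pow ha 3 p)
  rw [((hlin.sub hquad).congr_of_eventuallyEq (by filter_upwards with q; simp)).fderiv]
  simp only [PiLp.proj_apply, Pi.add_apply, Nat.cast_one, Nat.reduceAdd, inv_pow, one_mul,
    neg_smul, smul_neg, pow_one, smul_add, id_eq, Pi.mul_apply, Nat.cast_ofNat, sub_apply,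
    add_apply, neg_apply, smul_apply, coe_innerSL_apply, smul_eq_mul,
    ContinuousLinearMap.comp_apply, ContinuousLinearMap.prod_apply, ContinuousLinearMap.id_apply,
    zero_apply, fderivInnerCLM_apply, inner_zero_right, inner_self_eq_norm_sq_to_K,
    Real.ringHom_apply, zero_add]
  ring

theorem sum_iteratedFDeriv_two_single_quadratic_div_sqrt [DecidableEq ι] (ha : 0 < a) (c : ℝ)
    (i j : ι) (p : EuclideanSpace ℝ ι) :
    ∑ k, iteratedFDeriv ℝ 2 (fun q : EuclideanSpace ℝ ι => (c + q i * q j) / √(a + ‖q‖ ^ 2)) p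
        ![EuclideanSpace.single k 1, EuclideanSpace.single k 1] =
      2 * (if i = j then 1 else 0) * (√(a + ‖p‖ ^ 2))⁻¹ -
        4 * p i * p j * (√(a + ‖p‖ ^ 2))⁻¹ ^ 3 -
        Fintype.card ι * (c + p i * p j) * (√(a + ‖p‖ ^ 2))⁻¹ ^ 3 +
        3 * (c + p i * p j) * ‖p‖ ^ 2 * (√(a + ‖p‖ ^ 2))⁻¹ ^ 5 := by
  set ρ := (√(a + ‖p‖ ^ 2))⁻¹
  set N := c + p i * p j
  have hdiag : ∑ k, EuclideanSpace.single k (1 : ℝ) i * EuclideanSpace.single k (1 : ℝ) j =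
      if i = j then 1 else 0 := by
    simp [Finset.sum_ite_eq]
  have hcross : ∑ k, (EuclideanSpace.single k (1 : ℝ) i * p j +
      p i * EuclideanSpace.single k (1 : ℝ) j) * p k = 2 * (p i * p j) := by
    simp only [PiLp.single_apply, ite_mul, one_mul, zero_mul, mul_ite, mul_one, mul_zero, add_mul,
      Finset.sum_add_distrib, Finset.sum_ite_eq, Finset.mem_univ, ↓reduceIte]
    ring
  calc _ = ∑ k, (2 * ρ * (EuclideanSpace.single k (1 : ℝ) i * EuclideanSpace.single k (1 : ℝ) j) -
        2 * ρ ^ 3 * ((EuclideanSpace.single k (1 : ℝ) i * p j +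
          p i * EuclideanSpace.single k (1 : ℝ) j) * p k) - N * ρ ^ 3 + 3 * N * ρ ^ 5 * p k ^ 2) := by
        refine Finset.sum_congr rfl fun k _ => ?_
        rw [iteratedFDeriv_two_quadratic_div_sqrt ha, EuclideanSpace.inner_single_right,
          PiLp.norm_single]
        simp only [conj_trivial, one_mul, norm_one]
        ring
    _ = _ := by
        simp only [Finset.sum_add_distrib, Finset.sum_sub_distrib, ← Finset.mul_sum, hdiag, hcross,
          ← EuclideanSpace.real_norm_sq_eq, Finset.sum_const, Finset.card_univ, nsmul_eq_mul]
        ring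

theorem sum_sum_diag_add_rankOne_mul [DecidableEq ι] (α β : ℝ) (p x : EuclideanSpace ℝ ι) :
    ∑ i, ∑ j, (α * (if i = j then 1 else 0) + β * (p i * p j)) * x i * x j =
      α * ‖x‖ ^ 2 + β * ⟪p, x⟫ ^ 2 := by
  have hdiag : ∑ i, ∑ j, (if i = j then 1 else 0) * x i * x j = ‖x‖ ^ 2 := by
    simp [EuclideanSpace.real_norm_sq_eq, ite_mul, ← sq]
  have hrank : ∑ i, ∑ j, p i * p j * x i * x j = ⟪p, x⟫ ^ 2 := by
    simp only [sq, PiLp.inner_apply, RCLike.inner_apply, conj_trivial, Finset.sum_mul_sum]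
    exact Finset.sum_congr rfl fun _ _ => Finset.sum_congr rfl fun _ _ => by ring
  calc _ = ∑ i, ∑ j, (α * ((if i = j then 1 else 0) * x i * x j) + β * (p i * p j * x i * x j)) :=
        Finset.sum_congr rfl fun _ _ => Finset.sum_congr rfl fun _ _ => by ring
    _ = _ := by simp only [Finset.sum_add_distrib, ← Finset.mul_sum, hdiag, hrank]

theorem sum_sum_laplacian_quadratic_div_sqrt_mul_le [DecidableEq ι] (ha : 0 < a)
    (p x : EuclideanSpace ℝ ι) :
    ∑ i, ∑ j, ((1 / √(a + ‖p‖ ^ 2)) *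
          (2 * (if i = j then 1 else 0) - 4 * p i * p j / (a + ‖p‖ ^ 2)) -
        3 * a * ((a * (if i = j then 1 else 0) + p i * p j) / √(a + ‖p‖ ^ 2)) /
          (a + ‖p‖ ^ 2) ^ 2) * x i * x j ≤
      2 / √a * ‖x‖ ^ 2 := by
  set w := a + ‖p‖ ^ 2
  have hw : 0 < w := by positivity
  have hs : 0 < √w := Real.sqrt_pos.2 hw
  set α := 2 / √w - 3 * a ^ 2 / (√w * w ^ 2)
  set β := -(4 / (√w * w) + 3 * a / (√w * w ^ 2))
  have hα : α ≤ 2 / √a := calc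
    α ≤ 2 / √w := sub_le_self _ (by positivity)
    _ ≤ 2 / √a := by gcongr; simp [w]
  have hβ : β ≤ 0 := neg_nonpos.2 (by positivity)
  calc _ = ∑ i, ∑ j, (α * (if i = j then 1 else 0) + β * (p i * p j)) * x i * x j :=
        Finset.sum_congr rfl fun _ _ => Finset.sum_congr rfl fun _ _ => by
          simp only [α, β]
          field_simp
          ring
    _ = α * ‖x‖ ^ 2 + β * ⟪p, x⟫ ^ 2 := sum_sum_diag_add_rankOne_mul α β p x
    _ ≤ α * ‖x‖ ^ 2 := add_le_of_nonpos_right (mul_nonpos_of_nonpos_of_nonneg hβ (sq_nonneg _))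
    _ ≤ 2 / √a * ‖x‖ ^ 2 := by gcongr

end Coordinates

theorem sum_iteratedFDeriv_two_single_quadratic_div_sqrt_three {a : ℝ} (ha : 0 < a)
    (i j : Fin 3) (p : EuclideanSpace ℝ (Fin 3)) :
    ∑ k, iteratedFDeriv ℝ 2 (fun q : EuclideanSpace ℝ (Fin 3) =>
          (a * (if i = j then 1 else 0) + q i * q j) / √(a + ‖q‖ ^ 2)) p
        ![EuclideanSpace.single k 1, EuclideanSpace.single k 1] =
      (1 / √(a + ‖p‖ ^ 2)) * (2 * (if i = j then 1 else 0) - 4 * p i * p j / (a + ‖p‖ ^ 2)) -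
        3 * a * ((a * (if i = j then 1 else 0) + p i * p j) / √(a + ‖p‖ ^ 2)) /
          (a + ‖p‖ ^ 2) ^ 2 := by
  have hw : 0 < a + ‖p‖ ^ 2 := by positivity
  have hs : 0 < √(a + ‖p‖ ^ 2) := Real.sqrt_pos.2 hw
  have hs2 : √(a + ‖p‖ ^ 2) ^ 2 = a + ‖p‖ ^ 2 := Real.sq_sqrt hw.le
  rw [sum_iteratedFDeriv_two_single_quadratic_div_sqrt ha, Fintype.card_fin]
  field_simp
  rw [show √(a + ‖p‖ ^ 2) ^ 4 = (√(a + ‖p‖ ^ 2) ^ 2) ^ 2 by ring, hs2]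
  push_cast
  ring

theorem stmt_13 :
    (∀ (φ : ℝ) (p : EuclideanSpace ℝ (Fin 3)) (i j : Fin 3),
      ∑ k, iteratedFDeriv ℝ 2 (fun q => Dmat φ q i j) p
          ![EuclideanSpace.single k 1, EuclideanSpace.single k 1] =
        (1 / Real.sqrt (Real.exp (2 * φ) + ‖p‖ ^ 2)) *
            (2 * (if i = j then 1 else 0) -
              4 * p i * p j / (Real.exp (2 * φ) + ‖p‖ ^ 2)) -
          3 * Real.exp (2 * φ) * Dmat φ p i j / (Real.exp (2 * φ) + ‖p‖ ^ 2) ^ 2) ∧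
    ∃ C : ℝ, 0 < C ∧
      ∀ (φ : ℝ) (p x : EuclideanSpace ℝ (Fin 3)),
        ∑ i, ∑ j, ((1 / Real.sqrt (Real.exp (2 * φ) + ‖p‖ ^ 2)) *
              (2 * (if i = j then 1 else 0) -
                4 * p i * p j / (Real.exp (2 * φ) + ‖p‖ ^ 2)) -
            3 * Real.exp (2 * φ) * Dmat φ p i j /
              (Real.exp (2 * φ) + ‖p‖ ^ 2) ^ 2) * x i * x j ≤
          C * Real.exp (-φ) * ‖x‖ ^ 2 := by
  refine ⟨fun φ p i j =>
    sum_iteratedFDeriv_two_single_quadratic_div_sqrt_three (Real.exp_pos _) i j p,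
    2, two_pos, fun φ p x => ?_⟩
  have hsqrt : √(Real.exp (2 * φ)) = Real.exp φ := by
    rw [← Real.exp_half]
    ring_nf
  calc _ ≤ 2 / √(Real.exp (2 * φ)) * ‖x‖ ^ 2 :=
        sum_sum_laplacian_quadratic_div_sqrt_mul_le (Real.exp_pos _) p x
    _ = 2 * Real.exp (-φ) * ‖x‖ ^ 2 := by rw [hsqrt, Real.exp_neg, div_eq_mul_inv]
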